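/- Let K ≥ 1 be an integer and j an integer with 0 ≤ j ≤ K, let a ∈ [0,1) and b > 0 be real numbers with ⌈a⌉ < ⌊a + 2bK⌋, set q := ⌊a + 2bK⌋ and ω := a + 2bK − q, and let M be an integer with M > q. Then | ∑_{m=q+1}^{M} I_{C₃}(K,j;a−m,b) − e^{−(j+1)πi/2} · J(K,j; M−q, 2bK−ω, b) | ≤ e^{−K}. -/

import Mathlib

open scoped BigOperators

/-- `I_{C₃}(K,j;c,b) = (−i)^{j+1} K^{-j} ∫_0^∞ t^j exp(2πct − 2πib t²) dt`
(the contour integral along the downward ray `{−it : t ≥ 0}`, convergent for `c < 0`). -/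
noncomputable def IC3 (K j : ℕ) (c b : ℝ) : ℂ :=
  (-Complex.I) ^ (j + 1) * ((K : ℂ) ^ j)⁻¹ *
    ∫ t in Set.Ioi (0 : ℝ), (t : ℂ) ^ j *
      Complex.exp (2 * (Real.pi : ℂ) * (c : ℂ) * (t : ℂ) -
        2 * (Real.pi : ℂ) * Complex.I * (b : ℂ) * (t : ℂ) ^ 2)

/-- `J(K,l;M,w,b) = K^{-l} ∫_0^K t^l e^{-2πwt-2πibt²} (1 - e^{-2πMt})/(e^{2πt}-1) dt`. -/
noncomputable def Jint (K l : ℕ) (M : ℤ) (w b : ℝ) : ℂ :=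
  ((K : ℂ) ^ l)⁻¹ * ∫ t in (0 : ℝ)..(K : ℝ), (t : ℂ) ^ l *
    Complex.exp (-2 * (Real.pi : ℂ) * (w : ℂ) * (t : ℂ) -
      2 * (Real.pi : ℂ) * Complex.I * (b : ℂ) * (t : ℂ) ^ 2) *
    ((1 - Complex.exp (-2 * (Real.pi : ℂ) * (M : ℂ) * (t : ℂ))) /
      (Complex.exp (2 * (Real.pi : ℂ) * (t : ℂ)) - 1))

/-!
Writing `e^{2π(a-m)t} = e^{-2π(q-a)t} (e^{-2πt})^{m-q}`, the sum over `m` of the `I_{C₃}`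
integrands is a finite geometric series, and it equals the integrand of `J` with `w = q - a`,
which is `2bK - ω`. So the difference in question is `K^{-j}` times the tail `∫_K^∞` of that
integrand. For `t ≥ K ≥ j` one has `t^j ≤ K^j e^{t-K}` and `1/(e^{2πt} - 1) ≤ 2e^{-2πt}`, so the
tail is at most `2K^j e^{-K} ∫_K^∞ e^{(1-2π)t} dt ≤ K^j e^{-K}`.
-/

open MeasureTheory Set Real

theorem sum_Icc_zpow_sub_mul_inv_sub_one {𝕜 : Type*} [DivisionRing 𝕜] {r : 𝕜} (hr : r ≠ 0)
    {q M : ℤ} (hqM : q ≤ M) :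
    (∑ m ∈ Finset.Icc (q + 1) M, r ^ (m - q)) * (r⁻¹ - 1) = 1 - r ^ (M - q) := by
  induction M, hqM using Int.leInduction with
  | base => simp
  | succ M hqM ih =>
    rw [← Finset.insert_Icc_right_eq_Icc_add_one (by omega), Finset.sum_insert (by simp),
      add_mul, ih, show M + 1 - q = M - q + 1 by ring, zpow_add_one₀ hr, mul_assoc,
      mul_sub, mul_inv_cancel₀ hr, mul_one, mul_sub, mul_one]
    abel

theorem cexp_neg_mul_pi_mul_I_div_two (n : ℕ) :
    Complex.exp (-((n : ℂ) + 1) * π * Complex.I / 2) = (-Complex.I) ^ (n + 1) := by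
  rw [← Complex.exp_neg_pi_div_two_mul_I, ← Complex.exp_nat_mul]
  push_cast
  ring_nf

theorem pow_le_pow_mul_exp_sub {j : ℕ} {K t : ℝ} (hK : 0 < K) (hj : (j : ℝ) ≤ K) (ht : K ≤ t) :
    t ^ j ≤ K ^ j * rexp (t - K) := by
  have hratio : t / K ≤ rexp (t / K - 1) := by linarith [add_one_le_exp (t / K - 1)]
  have hexponent : (t / K - 1) * j ≤ t - K := by
    have h0 : 0 ≤ t / K - 1 := by rw [sub_nonneg, one_le_div hK]; exact ht
    calc (t / K - 1) * j ≤ (t / K - 1) * K := mul_le_mul_of_nonneg_left hj h0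
      _ = t - K := by field_simp
  calc t ^ j = K ^ j * (t / K) ^ j := by rw [div_pow]; field_simp
    _ ≤ K ^ j * rexp (t / K - 1) ^ j := by gcongr; exact div_nonneg (hK.le.trans ht) hK.le
    _ = K ^ j * rexp ((t / K - 1) * j) := by rw [← exp_nat_mul, mul_comm (j : ℝ)]
    _ ≤ K ^ j * rexp (t - K) := by gcongr

noncomputable def IC3.integrand (j : ℕ) (c b t : ℝ) : ℂ :=
  (t : ℂ) ^ j * Complex.exp (2 * π * c * t - 2 * π * Complex.I * b * (t : ℂ) ^ 2)

noncomputable def Jint.integrand (j : ℕ) (w b : ℝ) (N : ℤ) (t : ℝ) : ℂ :=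
  (t : ℂ) ^ j * Complex.exp (-2 * π * w * t - 2 * π * Complex.I * b * (t : ℂ) ^ 2) *
    ((1 - Complex.exp (-2 * π * N * t)) / (Complex.exp (2 * π * t) - 1))

theorem IC3_def (K j : ℕ) (c b : ℝ) :
    IC3 K j c b = (-Complex.I) ^ (j + 1) * ((K : ℂ) ^ j)⁻¹ *
      ∫ t in Ioi 0, IC3.integrand j c b t :=
  rfl

theorem Jint_eq_setIntegral_Ioc (K j : ℕ) (N : ℤ) (w b : ℝ) :
    Jint K j N w b = ((K : ℂ) ^ j)⁻¹ * ∫ t in Ioc 0 (K : ℝ), Jint.integrand j w b N t := by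
  rw [Jint, intervalIntegral.integral_of_le K.cast_nonneg]
  rfl

namespace IC3

theorem norm_integrand (j : ℕ) (c b t : ℝ) :
    ‖integrand j c b t‖ = |t| ^ j * rexp (2 * π * c * t) := by
  simp [integrand, Complex.norm_exp, ← Complex.ofReal_pow]

theorem integrableOn_integrand (j : ℕ) {c : ℝ} (hc : c < 0) (b : ℝ) :
    IntegrableOn (integrand j c b) (Ioi 0) := by
  have hdom : IntegrableOn (fun t : ℝ ↦ t ^ (j : ℝ) * rexp (-(-(2 * π * c)) * t ^ (1 : ℝ)))
      (Ioi 0) :=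
    integrableOn_rpow_mul_exp_neg_mul_rpow (by linarith [j.cast_nonneg (α := ℝ)]) one_pos
      (by nlinarith [pi_pos])
  refine hdom.mono' (Continuous.aestronglyMeasurable (by unfold integrand; fun_prop)) ?_
  filter_upwards [ae_restrict_mem measurableSet_Ioi] with t (ht : 0 < t)
  rw [norm_integrand, abs_of_pos ht, rpow_natCast, rpow_one, neg_neg]

end IC3

namespace Jint

theorem norm_integrand_le (j : ℕ) {w : ℝ} (hw : 0 ≤ w) (b : ℝ) {N : ℤ} (hN : 0 ≤ N) {t : ℝ}
    (ht : 1 ≤ t) : ‖integrand j w b N t‖ ≤ 2 * t ^ j * rexp (-(2 * π * t)) := by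
  have ht0 : 0 < t := by linarith
  have hgauss : ‖Complex.exp (-2 * π * w * t - 2 * π * Complex.I * b * (t : ℂ) ^ 2)‖ ≤ 1 := by
    simp [Complex.norm_exp, ← Complex.ofReal_pow]
    positivity
  have hnum : ‖1 - Complex.exp (-2 * π * N * t)‖ ≤ 1 := by
    have hNt : 0 ≤ 2 * π * N * t :=
      mul_nonneg (mul_nonneg (by positivity) (by exact_mod_cast hN)) ht0.le
    rw [show (-2 * π * N * t : ℂ) = ((-(2 * π * N * t) : ℝ) : ℂ) by push_cast; ring,
      ← Complex.ofReal_exp, ← Complex.ofReal_one, ← Complex.ofReal_sub, Complex.norm_real,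
      norm_eq_abs, abs_le]
    constructor <;> linarith [exp_pos (-(2 * π * N * t)), exp_le_one_iff.2 (neg_nonpos.2 hNt)]
  have hden : rexp (2 * π * t) / 2 ≤ ‖Complex.exp (2 * π * t) - 1‖ := by
    have h2 : 2 ≤ rexp (2 * π * t) := by nlinarith [add_one_le_exp (2 * π * t), pi_gt_three]
    rw [show (2 * π * t : ℂ) = ((2 * π * t : ℝ) : ℂ) by push_cast; ring,
      ← Complex.ofReal_exp, ← Complex.ofReal_one, ← Complex.ofReal_sub, Complex.norm_real,
      norm_eq_abs, abs_of_pos (by linarith)]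
    linarith
  calc ‖integrand j w b N t‖
      = t ^ j * ‖Complex.exp (-2 * π * w * t - 2 * π * Complex.I * b * (t : ℂ) ^ 2)‖ *
          (‖1 - Complex.exp (-2 * π * N * t)‖ / ‖Complex.exp (2 * π * t) - 1‖) := by
        rw [integrand, norm_mul, norm_mul, norm_div, norm_pow, Complex.norm_real, norm_eq_abs,
          abs_of_pos ht0]
    _ ≤ t ^ j * 1 * (1 / (rexp (2 * π * t) / 2)) := by gcongr
    _ = 2 * t ^ j * rexp (-(2 * π * t)) := by rw [exp_neg]; field_simp

theorem norm_setIntegral_Ioi_integrand_le {j : ℕ} {K w : ℝ} (hK : 1 ≤ K) (hj : (j : ℝ) ≤ K)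
    (hw : 0 ≤ w) (b : ℝ) {N : ℤ} (hN : 0 ≤ N) :
    ‖∫ t in Ioi K, integrand j w b N t‖ ≤ K ^ j * rexp (-K) := by
  have hdecay : 1 - 2 * π < 0 := by linarith [pi_gt_three]
  have hdom : ∀ t ∈ Ioi K,
      ‖integrand j w b N t‖ ≤ 2 * K ^ j * rexp (-K) * rexp ((1 - 2 * π) * t) := by
    intro t (ht : K < t)
    calc ‖integrand j w b N t‖ ≤ 2 * t ^ j * rexp (-(2 * π * t)) :=
          norm_integrand_le j hw b hN (hK.trans ht.le)
      _ ≤ 2 * (K ^ j * rexp (t - K)) * rexp (-(2 * π * t)) := by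
          gcongr; exact pow_le_pow_mul_exp_sub (by linarith) hj ht.le
      _ = 2 * K ^ j * rexp (-K) * rexp ((1 - 2 * π) * t) := by
          simp only [mul_assoc, ← exp_add]
          ring_nf
  calc ‖∫ t in Ioi K, integrand j w b N t‖
      ≤ ∫ t in Ioi K, 2 * K ^ j * rexp (-K) * rexp ((1 - 2 * π) * t) :=
        norm_integral_le_of_norm_le ((integrableOn_exp_mul_Ioi hdecay K).const_mul _)
          ((ae_restrict_mem measurableSet_Ioi).mono hdom)
    _ = K ^ j * rexp (-K) * (2 * rexp ((1 - 2 * π) * K) / (2 * π - 1)) := by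
        rw [integral_const_mul, integral_exp_mul_Ioi hdecay, ← neg_div_neg_eq, neg_neg, neg_sub]
        ring
    _ ≤ K ^ j * rexp (-K) * 1 := by
        gcongr
        rw [div_le_one (by linarith)]
        nlinarith [exp_le_one_iff.2 (by nlinarith : (1 - 2 * π) * K ≤ 0), pi_gt_three]
    _ = K ^ j * rexp (-K) := mul_one _

end Jint

theorem sum_IC3_integrand_eq (j : ℕ) (a b : ℝ) {q M : ℤ} (hqM : q ≤ M) {t : ℝ} (ht : t ≠ 0) :
    ∑ m ∈ Finset.Icc (q + 1) M, IC3.integrand j (a - m) b t =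
      Jint.integrand j (q - a) b (M - q) t := by
  set r := Complex.exp (-2 * π * t)
  have hinv : Complex.exp (2 * π * t) = r⁻¹ := by rw [← Complex.exp_neg]; ring_nf
  have hr : r⁻¹ - 1 ≠ 0 := by
    rw [← hinv, show (2 * π * t : ℂ) = ((2 * π * t : ℝ) : ℂ) by push_cast; ring,
      ← Complex.ofReal_exp, ← Complex.ofReal_one, ← Complex.ofReal_sub, Complex.ofReal_ne_zero,
      sub_ne_zero, Ne, exp_eq_one_iff]
    exact mul_ne_zero (by positivity) ht
  have hterm : ∀ m : ℤ, IC3.integrand j (a - m) b t =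
      t ^ j * Complex.exp (-2 * π * (q - a : ℝ) * t - 2 * π * Complex.I * b * (t : ℂ) ^ 2) *
        r ^ (m - q) := by
    intro m
    rw [IC3.integrand, ← Complex.exp_int_mul, mul_assoc ((t : ℂ) ^ j), ← Complex.exp_add]
    push_cast
    ring_nf
  have hN : Complex.exp (-2 * π * ((M - q : ℤ) : ℂ) * t) = r ^ (M - q) := by
    rw [← Complex.exp_int_mul]; ring_nf
  rw [Finset.sum_congr rfl fun m _ ↦ hterm m, ← Finset.mul_sum, Jint.integrand, hinv, hN,
    ← sum_Icc_zpow_sub_mul_inv_sub_one (Complex.exp_ne_zero _) hqM, mul_div_cancel_right₀ _ hr]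

theorem sum_IC3_sub_Jint (K j : ℕ) {a : ℝ} (b : ℝ) {q M : ℤ} (hq : a < q + 1) (hqM : q ≤ M) :
    ∑ m ∈ Finset.Icc (q + 1) M, IC3 K j (a - m) b -
        (-Complex.I) ^ (j + 1) * Jint K j (M - q) (q - a) b =
      (-Complex.I) ^ (j + 1) * ((K : ℂ) ^ j)⁻¹ *
        ∫ t in Ioi (K : ℝ), Jint.integrand j (q - a) b (M - q) t := by
  set g := Jint.integrand j (q - a) b (M - q)
  have hint : ∀ m ∈ Finset.Icc (q + 1) M, IntegrableOn (IC3.integrand j (a - m) b) (Ioi 0) := by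
    intro m hm
    have : (q : ℝ) + 1 ≤ m := by exact_mod_cast (Finset.mem_Icc.1 hm).1
    exact IC3.integrableOn_integrand j (by linarith) b
  have hsum : EqOn (fun t ↦ ∑ m ∈ Finset.Icc (q + 1) M, IC3.integrand j (a - m) b t) g (Ioi 0) :=
    fun t ht ↦ sum_IC3_integrand_eq j a b hqM (ne_of_gt ht)
  have hg : IntegrableOn g (Ioi 0) := 
    IntegrableOn.congr_fun (integrable_finsetSum _ hint) hsum measurableSet_Ioi
  have hsplit : ∫ t in Ioi 0, g t = (∫ t in Ioc 0 (K : ℝ), g t) + ∫ t in Ioi (K : ℝ), g t := by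
    rw [← Ioc_union_Ioi_eq_Ioi K.cast_nonneg, setIntegral_union (Ioc_disjoint_Ioi le_rfl)
      measurableSet_Ioi (hg.mono_set Ioc_subset_Ioi_self)
      (hg.mono_set (Ioi_subset_Ioi K.cast_nonneg))]
  simp only [IC3_def]
  rw [← Finset.mul_sum, ← integral_finsetSum _ hint, setIntegral_congr_fun measurableSet_Ioi hsum,
    hsplit, Jint_eq_setIntegral_Ioc]
  ring

theorem sum_IC3_approx_J (K : ℕ) (hK : 1 ≤ K) (j : ℕ) (hj : j ≤ K)
    (a b : ℝ)
    (hpq : (⌈a⌉ : ℤ) < ⌊a + 2 * b * K⌋)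
    (M : ℤ) (hM : ⌊a + 2 * b * K⌋ < M) :
    ‖(∑ m ∈ Finset.Icc (⌊a + 2 * b * K⌋ + 1) M, IC3 K j (a - (m : ℝ)) b) -
        Complex.exp (-((j : ℂ) + 1) * (Real.pi : ℂ) * Complex.I / 2) *
          Jint K j (M - ⌊a + 2 * b * K⌋)
            (2 * b * K - Int.fract (a + 2 * b * K)) b‖ ≤ Real.exp (-(K : ℝ)) := by
  set q := ⌊a + 2 * b * K⌋
  have hw : 2 * b * K - Int.fract (a + 2 * b * K) = q - a := by rw [← Int.self_sub_floor]; ring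
  have hqa : a + 1 ≤ q := by
    have : (⌈a⌉ : ℝ) + 1 ≤ q := by exact_mod_cast hpq
    linarith [Int.le_ceil a]
  have hK' : (1 : ℝ) ≤ K := by exact_mod_cast hK
  rw [hw, cexp_neg_mul_pi_mul_I_div_two, sum_IC3_sub_Jint K j b (by linarith) hM.le, norm_mul,
    norm_mul, norm_pow, norm_neg, Complex.norm_I, one_pow, one_mul, norm_inv, norm_pow,
    Complex.norm_natCast, inv_mul_le_iff₀ (by positivity)]
  exact Jint.norm_setIntegral_Ioi_integrand_le hK' (by exact_mod_cast hj) (by linarith) b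
    (by omega)
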